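/- Let G be a pertinent group and H a subgroup of G of even order containing a Sylow 3-subgroup of G. Then H is pertinent. -/

import Mathlib

/-!
An involution `t ∈ H` exists because `|H|` is even. Its `G`-class consists of all three involutions,
so `[G : C_G(t)] = 3`. As `H` contains a Sylow `3`-subgroup, `3 ∤ [G : H]`, whence
`3 ∣ [H : C_H(t)]`: the `H`-class of `t` has three elements too, so it is the whole `G`-class, and
every involution of `G` is an `H`-conjugate of `t`.
-/

/-- A finite group is *pertinent* if it has exactly three involutions and
they are pairwise conjugate. -/
def Pertinent (G : Type*) [Group G] : Prop :=
  Finite G ∧ {g : G | orderOf g = 2}.ncard = 3 ∧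
    ∀ a b : G, orderOf a = 2 → orderOf b = 2 → IsConj a b

open Subgroup

section

variable {G : Type*} [Group G]

theorem IsConj.orderOf_eq {a b : G} (h : IsConj a b) : orderOf a = orderOf b :=
  let ⟨_, hc⟩ := h
  SemiconjBy.orderOf_eq _ hc

theorem Subgroup.index_centralizer_singleton (g : G) :
    (centralizer {g}).index = (conjugatesOf g).ncard := by
  have h := MulAction.index_stabilizer (ConjAct G) g
  rw [ConjAct.stabilizer_eq_centralizer] at h
  have horbit : MulAction.orbit (ConjAct G) g = conjugatesOf g := by
    ext h
    rw [ConjAct.mem_orbit_conjAct, isConj_comm]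
    rfl
  exact horbit ▸ h

theorem Subgroup.centralizer_singleton_subgroupOf {H : Subgroup G} (t : H) :
    (centralizer {(t : G)}).subgroupOf H = centralizer {t} := by
  ext h
  simp [mem_subgroupOf, mem_centralizer_singleton_iff, Subtype.ext_iff]

theorem Sylow.prime_dvd_relIndex {p : ℕ} [Fact p.Prime] (P : Sylow p G) [P.FiniteIndex]
    {H K : Subgroup G} (hP : (P : Subgroup G) ≤ H) (hK : p ∣ K.index) : p ∣ K.relIndex H := by
  have hH : ¬ p ∣ H.index := fun h => P.not_dvd_index (h.trans (index_dvd_of_le hP))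
  have hKH : (K ⊓ H).index = K.relIndex H * H.index := by
    rw [← inf_relIndex_right, relIndex_mul_index inf_le_right]
  have : p ∣ K.relIndex H * H.index := hKH ▸ hK.trans (index_dvd_of_le inf_le_left)
  exact ((Nat.Prime.dvd_mul Fact.out).mp this).resolve_right hH

theorem Sylow.subtype_image_conjugatesOf_eq {p : ℕ} [Fact p.Prime] [Finite G] (P : Sylow p G)
    {H : Subgroup G} (hP : (P : Subgroup G) ≤ H) {t : H} (ht : (conjugatesOf (t : G)).ncard = p) :
    H.subtype '' conjugatesOf t = conjugatesOf (t : G) := by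
  have hsub : H.subtype '' conjugatesOf t ⊆ conjugatesOf (t : G) := by
    rintro _ ⟨x, hx, rfl⟩
    exact H.subtype.map_isConj hx
  have hdvd : p ∣ (H.subtype '' conjugatesOf t).ncard := by
    rw [Set.ncard_image_of_injective _ H.subtype_injective, ← index_centralizer_singleton,
      ← centralizer_singleton_subgroupOf]
    exact P.prime_dvd_relIndex hP (by rw [index_centralizer_singleton, ht])
  have hpos : 0 < (H.subtype '' conjugatesOf t).ncard :=
    (Set.ncard_pos (Set.toFinite _)).mpr (Set.image_nonempty.mpr ⟨t, mem_conjugatesOf_self⟩)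
  exact Set.eq_of_subset_of_ncard_le hsub (ht ▸ Nat.le_of_dvd hpos hdvd)

theorem conjugatesOf_eq_setOf_orderOf_eq_two
    (hG : ∀ a b : G, orderOf a = 2 → orderOf b = 2 → IsConj a b)
    {t : G} (ht : orderOf t = 2) : conjugatesOf t = {g : G | orderOf g = 2} := by
  ext g
  exact ⟨fun h => h.orderOf_eq.symm.trans ht, hG t g ht⟩

end

theorem stmt_3 (G : Type*) [Group G] (hG : Pertinent G) (H : Subgroup G)
    (hHeven : Even (Nat.card H)) (P : Sylow 3 G) (hP : (P : Subgroup G) ≤ H) :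
    Pertinent H := by
  obtain ⟨hfin, hcard, hconj⟩ := hG
  obtain ⟨t, ht⟩ := exists_prime_orderOf_dvd_card' 2 hHeven.two_dvd
  have hclass := conjugatesOf_eq_setOf_orderOf_eq_two hconj (t := (t : G)) (by rwa [orderOf_coe])
  have himage := P.subtype_image_conjugatesOf_eq hP (t := t) (by rw [hclass, hcard])
  have hinv : {h : H | orderOf h = 2} = conjugatesOf t := by
    ext h
    rw [← H.subtype_injective.mem_set_image (s := conjugatesOf t), himage, hclass]
    simp only [Set.mem_ofPred_eq, coe_subtype, orderOf_coe]
  refine ⟨inferInstance, ?_, fun a b ha hb => ?_⟩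
  · rw [hinv, ← Set.ncard_image_of_injective _ H.subtype_injective, himage, hclass, hcard]
  · have ha' : a ∈ conjugatesOf t := hinv ▸ ha
    have hb' : b ∈ conjugatesOf t := hinv ▸ hb
    exact (ha' : IsConj t a).symm.trans hb'
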